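/- arXiv:1703.01033 — 3 statements merged into one kernel-verified Lean document; each statement's English description precedes it below -/
import Mathlib

section
/- Let c > 0, a > 0, and let w : [-a,a] → ℝ be C¹ with w' = -g on [-a,a] where g ≥ 0, and w(-a) = c. Suppose additionally w(a) ≥ 0. Let u be C² with -u'' + c u' = -w' on (-a,a), u(a) = 1, and -u'(-a) + c u(-a) = 0. Then 0 ≤ u(x) ≤ 1 for all x ∈ [-a,a]. -/
open Set Real

/-- Derivative of `exp(-(c x)) * f x`. -/
lemma aux_exp_mul (c : ℝ) {f : ℝ → ℝ} {f' x : ℝ} (hf : HasDerivAt f f' x) :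
    HasDerivAt (fun y => Real.exp (-(c*y)) * f y)
      (Real.exp (-(c*x)) * (f' - c * f x)) x := by
  have h1 : HasDerivAt (fun y : ℝ => Real.exp (-(c*y))) (Real.exp (-(c*x)) * (-(c*1))) x :=
    (((hasDerivAt_id x).const_mul c).neg).exp
  have h2 : HasDerivAt (fun y => Real.exp (-(c*y)) * f y) _ x := h1.mul hf
  convert h2 using 1
  ring

/-- A priori bound `0 ≤ u ≤ 1` for the temperature profile. -/
theorem stmt_2 (a c : ℝ) (ha : 0 < a) (hc : 0 < c)
    (w g u : ℝ → ℝ)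
    (hw : ContDiffOn ℝ 1 w (Icc (-a) a))
    (hg : ∀ x ∈ Icc (-a) a, 0 ≤ g x)
    (hw' : ∀ x ∈ Icc (-a) a, deriv w x = -g x)
    (hwa : w (-a) = c) (hwb : 0 ≤ w a)
    (hu : ContDiffOn ℝ 2 u (Icc (-a) a))
    (hode : ∀ x ∈ Ioo (-a) a, -(deriv (deriv u) x) + c * deriv u x = -(deriv w x))
    (hua : u a = 1)
    (hflux : -(deriv u (-a)) + c * u (-a) = 0) :
    ∀ x ∈ Icc (-a) a, 0 ≤ u x ∧ u x ≤ 1 := by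
  have haa : -a < a := by linarith
  have haa' : -a ≤ a := haa.le
  have hI : UniqueDiffOn ℝ (Icc (-a) a) := uniqueDiffOn_Icc haa
  -- facts on Ioo
  have huIoo : ContDiffOn ℝ 2 u (Ioo (-a) a) := hu.mono Ioo_subset_Icc_self
  have huIoo' : ContDiffOn ℝ ((1 : ℕ) + 1) u (Ioo (-a) a) := by exact_mod_cast huIoo
  have hsplit := (contDiffOn_succ_iff_deriv_of_isOpen (n := (1:ℕ)) isOpen_Ioo).1 huIoo'
  have hudiff : ∀ x ∈ Ioo (-a) a, DifferentiableAt ℝ u x := fun x hx =>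
    hsplit.1.differentiableAt (isOpen_Ioo.mem_nhds hx)
  have hud2 : ∀ x ∈ Ioo (-a) a, DifferentiableAt ℝ (deriv u) x := fun x hx =>
    (hsplit.2.2.differentiableOn (by simp)).differentiableAt (isOpen_Ioo.mem_nhds hx)
  have hwdiff : ∀ x ∈ Ioo (-a) a, DifferentiableAt ℝ w x := fun x hx =>
    ((hw.mono Ioo_subset_Icc_self).differentiableOn one_ne_zero).differentiableAt
      (isOpen_Ioo.mem_nhds hx)
  -- w is antitone, hence bounds on w
  have hwanti : AntitoneOn w (Icc (-a) a) := by
    apply antitoneOn_of_deriv_nonpos (convex_Icc _ _) hw.continuousOn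
    · rw [interior_Icc]
      exact fun x hx => (hwdiff x hx).differentiableWithinAt
    · intro x hx
      rw [interior_Icc] at hx
      rw [hw' x (Ioo_subset_Icc_self hx)]
      have := hg x (Ioo_subset_Icc_self hx)
      linarith
  have hw0 : ∀ x ∈ Icc (-a) a, 0 ≤ w x ∧ w x ≤ c := by
    intro x hx
    have h1 := hwanti hx (right_mem_Icc.2 haa') hx.2
    have h2 := hwanti (left_mem_Icc.2 haa') hx hx.1
    rw [hwa] at h2
    exact ⟨le_trans hwb h1, h2⟩
  -- p = derivWithin u (Icc)
  set p : ℝ → ℝ := derivWithin u (Icc (-a) a) with hp_def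
  have hp_eq : ∀ x ∈ Ioo (-a) a, p x = deriv u x := fun x hx =>
    derivWithin_of_mem_nhds (Icc_mem_nhds hx.1 hx.2)
  have hp_cont : ContinuousOn p (Icc (-a) a) :=
    (hu.derivWithin (m := 1) hI (by norm_num)).continuousOn
  have hp_hasDeriv : ∀ x ∈ Ioo (-a) a, HasDerivAt p (deriv (deriv u) x) x := by
    intro x hx
    have h1 : HasDerivAt (deriv u) (deriv (deriv u) x) x := (hud2 x hx).hasDerivAt
    apply h1.congr_of_eventuallyEq
    filter_upwards [isOpen_Ioo.mem_nhds hx] with y hy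
    exact hp_eq y hy
  have hu_hasDeriv : ∀ x ∈ Ioo (-a) a, HasDerivAt u (p x) x := by
    intro x hx
    rw [hp_eq x hx]
    exact (hudiff x hx).hasDerivAt
  -- F is constant
  set F : ℝ → ℝ := fun x => -(p x) + c * u x + w x with hF_def
  have hFcont : ContinuousOn F (Icc (-a) a) :=
    (hp_cont.neg.add (hu.continuousOn.const_smul c)).add hw.continuousOn
  have hF' : ∀ x ∈ Ioo (-a) a, HasDerivAt F 0 x := by
    intro x hx
    have h := ((hp_hasDeriv x hx).neg.add ((hu_hasDeriv x hx).const_mul c)).add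
      (hwdiff x hx).hasDerivAt
    have hval : -(deriv (deriv u) x) + c * p x + deriv w x = 0 := by
      have := hode x hx
      rw [hp_eq x hx]
      linarith
    rw [hval] at h
    exact h
  have hFdiff : DifferentiableOn ℝ F (interior (Icc (-a) a)) := by
    rw [interior_Icc]; exact fun x hx => ((hF' x hx).differentiableAt).differentiableWithinAt
  have hFd0 : ∀ x ∈ interior (Icc (-a) a), deriv F x = 0 := by
    rw [interior_Icc]; exact fun x hx => (hF' x hx).deriv
  have hFconst : ∀ x ∈ Icc (-a) a, F x = F (-a) := by
    intro x hx
    have hm := monotoneOn_of_deriv_nonneg (convex_Icc _ _) hFcont hFdiff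
      (fun y hy => (hFd0 y hy).ge) (left_mem_Icc.2 haa') hx hx.1
    have hn := antitoneOn_of_deriv_nonpos (convex_Icc _ _) hFcont hFdiff
      (fun y hy => (hFd0 y hy).le) (left_mem_Icc.2 haa') hx hx.1
    linarith
  set K : ℝ := F (-a) - c with hK_def
  have hkey : ∀ x ∈ Icc (-a) a, p x = c * u x + w x - c - K := by
    intro x hx
    have h := hFconst x hx
    simp only [hF_def, hK_def] at h ⊢
    linarith
  have hKa : K = -(p (-a)) + c * u (-a) := by
    have := hkey (-a) (left_mem_Icc.2 haa')
    rw [hwa] at this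
    linarith
  -- the two auxiliary functions
  set ψ : ℝ → ℝ := fun x => Real.exp (-(c*x)) * u x with hψ_def
  set φ : ℝ → ℝ := fun x => Real.exp (-(c*x)) * (u x - 1) with hφ_def
  have hψcont : ContinuousOn ψ (Icc (-a) a) :=
    ((Real.continuous_exp.comp (continuous_const.mul continuous_id).neg).continuousOn).mul
      hu.continuousOn
  have hφcont : ContinuousOn φ (Icc (-a) a) :=
    ((Real.continuous_exp.comp (continuous_const.mul continuous_id).neg).continuousOn).mul
      (hu.continuousOn.sub continuousOn_const)
  have hψ' : ∀ x ∈ Ioo (-a) a, HasDerivAt ψ (Real.exp (-(c*x)) * (w x - c - K)) x := by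
    intro x hx
    have h := aux_exp_mul c (hu_hasDeriv x hx)
    have : p x - c * u x = w x - c - K := by
      have := hkey x (Ioo_subset_Icc_self hx); linarith
    rwa [this] at h
  have hφ' : ∀ x ∈ Ioo (-a) a, HasDerivAt φ (Real.exp (-(c*x)) * (w x - K)) x := by
    intro x hx
    have h := aux_exp_mul c ((hu_hasDeriv x hx).sub_const 1)
    have : p x - c * (u x - 1) = w x - K := by
      have := hkey x (Ioo_subset_Icc_self hx); linarith
    rwa [this] at h
  -- antitone / monotone criteria for ψ on subintervals
  have hψanti : ∀ s, s ∈ Icc (-a) a → (∀ y ∈ Ioo s a, w y - c - K ≤ 0) →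
      AntitoneOn ψ (Icc s a) := by
    intro s hs hcond
    have hsub : Ioo s a ⊆ Ioo (-a) a := Ioo_subset_Ioo hs.1 le_rfl
    apply antitoneOn_of_deriv_nonpos (convex_Icc _ _) (hψcont.mono (Icc_subset_Icc hs.1 le_rfl))
    · rw [interior_Icc]
      exact fun y hy => ((hψ' y (hsub hy)).differentiableAt).differentiableWithinAt
    · intro y hy
      rw [interior_Icc] at hy
      rw [(hψ' y (hsub hy)).deriv]
      exact mul_nonpos_of_nonneg_of_nonpos (Real.exp_pos _).le (hcond y hy)
  have hψmono : ∀ s, s ∈ Icc (-a) a → (∀ y ∈ Ioo (-a) s, 0 ≤ w y - c - K) →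
      MonotoneOn ψ (Icc (-a) s) := by
    intro s hs hcond
    have hsub : Ioo (-a) s ⊆ Ioo (-a) a := Ioo_subset_Ioo le_rfl hs.2
    apply monotoneOn_of_deriv_nonneg (convex_Icc _ _) (hψcont.mono (Icc_subset_Icc le_rfl hs.2))
    · rw [interior_Icc]
      exact fun y hy => ((hψ' y (hsub hy)).differentiableAt).differentiableWithinAt
    · intro y hy
      rw [interior_Icc] at hy
      rw [(hψ' y (hsub hy)).deriv]
      exact mul_nonneg (Real.exp_pos _).le (hcond y hy)
  -- establish K ≤ 0 and 0 ≤ u (-a)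
  have hcase : K ≤ 0 ∧ 0 ≤ u (-a) := by
    by_cases hdiff : DifferentiableAt ℝ u (-a)
    · -- good case : K = 0
      have hpa : p (-a) = deriv u (-a) :=
        hdiff.derivWithin (hI (-a) (left_mem_Icc.2 haa'))
      have hK0 : K = 0 := by rw [hKa, hpa]; linarith [hflux]
      refine ⟨hK0.le, ?_⟩
      -- ψ antitone on [-a, a], so ψ(-a) ≥ ψ(a) > 0
      have hanti := hψanti (-a) (left_mem_Icc.2 haa') (fun y hy => by
        have := (hw0 y (Ioo_subset_Icc_self hy)).2
        rw [hK0]; linarith)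
      have h1 := hanti (left_mem_Icc.2 haa') (right_mem_Icc.2 haa') haa'
      simp only [hψ_def, hua, mul_one] at h1
      nlinarith [Real.exp_pos (-(c*a)), Real.exp_pos (-(c*(-a)))]
    · -- bad case : deriv u (-a) = 0 is junk, u (-a) = 0
      have hd0 : deriv u (-a) = 0 := deriv_zero_of_not_differentiableAt hdiff
      have hu0 : u (-a) = 0 := by
        rw [hd0] at hflux
        have : c * u (-a) = 0 := by linarith
        exact (mul_eq_zero.1 this).resolve_left (ne_of_gt hc)
      refine ⟨?_, hu0.ge⟩
      by_contra hKpos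
      push_neg at hKpos
      -- then p(-a) = -K < 0 and e^{-cx} p is antitone, so p < 0 on all of Icc
      have hpa : p (-a) = -K := by
        have := hkey (-a) (left_mem_Icc.2 haa')
        rw [hwa, hu0] at this
        linarith
      set χ : ℝ → ℝ := fun x => Real.exp (-(c*x)) * p x with hχ_def
      have hχcont : ContinuousOn χ (Icc (-a) a) :=
        ((Real.continuous_exp.comp (continuous_const.mul continuous_id).neg).continuousOn).mul
          hp_cont
      have hχ' : ∀ x ∈ Ioo (-a) a, HasDerivAt χ (Real.exp (-(c*x)) * (deriv w x)) x := by
        intro x hx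
        have h := aux_exp_mul c (hp_hasDeriv x hx)
        have hval : deriv (deriv u) x - c * p x = deriv w x := by
          have h1 := hode x hx
          rw [hp_eq x hx]
          linarith
        rwa [hval] at h
      have hχanti : AntitoneOn χ (Icc (-a) a) := by
        apply antitoneOn_of_deriv_nonpos (convex_Icc _ _) hχcont
        · rw [interior_Icc]
          exact fun y hy => ((hχ' y hy).differentiableAt).differentiableWithinAt
        · intro y hy
          rw [interior_Icc] at hy
          rw [(hχ' y hy).deriv, hw' y (Ioo_subset_Icc_self hy)]
          have := hg y (Ioo_subset_Icc_self hy)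
          have := (Real.exp_pos (-(c*y))).le
          nlinarith
      -- hence p ≤ 0 on Icc, so u is antitone, contradiction with u(-a)=0, u(a)=1
      have hpneg : ∀ x ∈ Icc (-a) a, p x ≤ 0 := by
        intro x hx
        have h1 := hχanti (left_mem_Icc.2 haa') hx hx.1
        simp only [hχ_def, hpa] at h1
        have he1 : (0:ℝ) < Real.exp (-(c*(-a))) := Real.exp_pos _
        have he2 : (0:ℝ) < Real.exp (-(c*x)) := Real.exp_pos _
        nlinarith
      have huanti : AntitoneOn u (Icc (-a) a) := by
        apply antitoneOn_of_deriv_nonpos (convex_Icc _ _) hu.continuousOn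
        · rw [interior_Icc]; exact fun y hy => (hudiff y hy).differentiableWithinAt
        · intro y hy
          rw [interior_Icc] at hy
          rw [← hp_eq y hy]
          exact hpneg y (Ioo_subset_Icc_self hy)
      have := huanti (left_mem_Icc.2 haa') (right_mem_Icc.2 haa') haa'
      rw [hu0, hua] at this
      linarith
  obtain ⟨hKle, hua0⟩ := hcase
  -- conclusion
  intro x hx
  constructor
  · -- lower bound via ψ
    by_cases hb : w x - c - K ≤ 0
    · have hanti := hψanti x hx (fun y hy => by
        have := hwanti hx (Ioo_subset_Icc_self (Ioo_subset_Ioo hx.1 le_rfl hy)) hy.1.le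
        linarith)
      have h1 := hanti (left_mem_Icc.2 hx.2) (right_mem_Icc.2 hx.2) hx.2
      simp only [hψ_def, hua, mul_one] at h1
      nlinarith [Real.exp_pos (-(c*a)), Real.exp_pos (-(c*x))]
    · push_neg at hb
      have hmono := hψmono x hx (fun y hy => by
        have := hwanti (Ioo_subset_Icc_self (Ioo_subset_Ioo le_rfl hx.2 hy)) hx hy.2.le
        linarith)
      have h1 := hmono (left_mem_Icc.2 hx.1) (right_mem_Icc.2 hx.1) hx.1
      simp only [hψ_def] at h1
      nlinarith [Real.exp_pos (-(c*(-a))), Real.exp_pos (-(c*x))]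
  · -- upper bound via φ
    have hφmono : MonotoneOn φ (Icc (-a) a) := by
      apply monotoneOn_of_deriv_nonneg (convex_Icc _ _) hφcont
      · rw [interior_Icc]
        exact fun y hy => ((hφ' y hy).differentiableAt).differentiableWithinAt
      · intro y hy
        rw [interior_Icc] at hy
        rw [(hφ' y hy).deriv]
        have := (hw0 y (Ioo_subset_Icc_self hy)).1
        have := (Real.exp_pos (-(c*y))).le
        nlinarith
    have h1 := hφmono hx (right_mem_Icc.2 haa') hx.2
    simp only [hφ_def, hua, sub_self, mul_zero] at h1
    nlinarith [Real.exp_pos (-(c*x))]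
end

section
/- Let c > 0, Λ > 0, a > 0, and let m : [-a,a] → [0, m_u] be continuous and nonincreasing. If w̄ : [-a,a] → ℝ satisfies Λ w̄(x) = c n₀ ∫ₓᵃ e^{-c(s-x)/Λ} m(s) ds for all x, then 0 ≤ w̄(x) ≤ n₀ m(x) for all x ∈ [-a,a]. -/
open Set Real

lemma exp_int (c Λ x a : ℝ) (hc : 0 < c) (hΛ : 0 < Λ) :
    ∫ s in x..a, Real.exp (-(c * (s - x)) / Λ)
      = (Λ / c) * (1 - Real.exp (-(c * (a - x)) / Λ)) := by
  have key : ∀ s : ℝ, HasDerivAt (fun s => -(Λ / c) * Real.exp (-(c * (s - x)) / Λ))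
      (Real.exp (-(c * (s - x)) / Λ)) s := by
    intro s
    have h1 : HasDerivAt (fun s : ℝ => -(c * (s - x)) / Λ) (-c / Λ) s := by
      have : HasDerivAt (fun s : ℝ => (-c / Λ) * s + c * x / Λ) (-c / Λ) s := by
        simpa using ((hasDerivAt_id s).const_mul (-c / Λ)).add_const (c * x / Λ)
      convert this using 2 with s
      field_simp; ring
    have h2 := (Real.hasDerivAt_exp (-(c * (s - x)) / Λ)).comp s h1
    have h3 := h2.const_mul (-(Λ / c))
    refine h3.congr_deriv ?_
    have hk : (Λ / c) * (c / Λ) = 1 := by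
      rw [div_mul_div_comm, mul_comm Λ c, div_self (by positivity)]
    linear_combination (Real.exp (-(c * (s - x)) / Λ)) * hk
  have hint : IntervalIntegrable (fun s => Real.exp (-(c * (s - x)) / Λ))
      MeasureTheory.volume x a := by
    apply Continuous.intervalIntegrable
    continuity
  rw [intervalIntegral.integral_eq_sub_of_hasDerivAt (fun s _ => key s) hint]
  ring_nf
  rw [Real.exp_zero]
  ring

/-- Pointwise bound `0 ≤ w̄ ≤ n₀ m` for the auxiliary function given by its
explicit integral representation. -/
theorem stmt_3 (a c Λ n₀ mu : ℝ) (ha : 0 < a) (hc : 0 < c) (hΛ : 0 < Λ)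
    (hn₀ : 0 ≤ n₀) (hmu : 0 ≤ mu)
    (m wbar : ℝ → ℝ)
    (hm_cont : ContinuousOn m (Icc (-a) a))
    (hm_anti : AntitoneOn m (Icc (-a) a))
    (hm_range : ∀ x ∈ Icc (-a) a, m x ∈ Icc (0:ℝ) mu)
    (hwbar : ∀ x ∈ Icc (-a) a,
      Λ * wbar x = c * n₀ * ∫ s in x..a, Real.exp (-(c * (s - x)) / Λ) * m s) :
    ∀ x ∈ Icc (-a) a, 0 ≤ wbar x ∧ wbar x ≤ n₀ * m x := by
  intro x hx
  obtain ⟨hx1, hx2⟩ := hx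
  have hsub : Icc x a ⊆ Icc (-a) a := Icc_subset_Icc hx1 le_rfl
  have hI_nonneg : 0 ≤ ∫ s in x..a, Real.exp (-(c * (s - x)) / Λ) * m s := by
    apply intervalIntegral.integral_nonneg hx2
    intro u hu
    exact mul_nonneg (Real.exp_nonneg _) (hm_range u (hsub hu)).1
  have heq := hwbar x ⟨hx1, hx2⟩
  constructor
  · nlinarith [mul_nonneg (mul_nonneg hc.le hn₀) hI_nonneg]
  · -- upper bound
    have hcont1 : ContinuousOn (fun s => Real.exp (-(c * (s - x)) / Λ) * m s) (Icc x a) := by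
      apply ContinuousOn.mul
      · exact (Continuous.continuousOn (by continuity))
      · exact hm_cont.mono hsub
    have hint1 : IntervalIntegrable (fun s => Real.exp (-(c * (s - x)) / Λ) * m s)
        MeasureTheory.volume x a := by
      rw [intervalIntegrable_iff_integrableOn_Icc_of_le hx2]
      exact hcont1.integrableOn_Icc
    have hint2 : IntervalIntegrable (fun s => Real.exp (-(c * (s - x)) / Λ) * m x)
        MeasureTheory.volume x a := by
      apply Continuous.intervalIntegrable; continuity
    have hmono : ∫ s in x..a, Real.exp (-(c * (s - x)) / Λ) * m s
        ≤ ∫ s in x..a, Real.exp (-(c * (s - x)) / Λ) * m x := by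
      apply intervalIntegral.integral_mono_on hx2 hint1 hint2
      intro s hs
      have hms : m s ≤ m x := hm_anti ⟨hx1, hx2⟩ (hsub hs) hs.1
      exact mul_le_mul_of_nonneg_left hms (Real.exp_nonneg _)
    have hval : ∫ s in x..a, Real.exp (-(c * (s - x)) / Λ) * m x
        = ((Λ / c) * (1 - Real.exp (-(c * (a - x)) / Λ))) * m x := by
      rw [intervalIntegral.integral_mul_const, exp_int c Λ x a hc hΛ]
    have hmx : 0 ≤ m x := (hm_range x ⟨hx1, hx2⟩).1
    have hbound : ((Λ / c) * (1 - Real.exp (-(c * (a - x)) / Λ))) * m x ≤ (Λ / c) * m x := by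
      have h1 : (1 - Real.exp (-(c * (a - x)) / Λ)) ≤ 1 := by
        have := Real.exp_nonneg (-(c * (a - x)) / Λ); linarith
      have h2 : 0 ≤ Λ / c := by positivity
      nlinarith [mul_nonneg (mul_nonneg h2 (Real.exp_nonneg (-(c * (a - x)) / Λ))) hmx]
    have : Λ * wbar x ≤ c * n₀ * ((Λ / c) * m x) := by
      rw [heq]
      have hI2 : (∫ s in x..a, Real.exp (-(c * (s - x)) / Λ) * m s) ≤ (Λ / c) * m x := by
        calc _ ≤ _ := hmono
        _ = _ := hval
        _ ≤ _ := hbound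
      exact mul_le_mul_of_nonneg_left hI2 (by positivity)
    have hfin : c * n₀ * ((Λ / c) * m x) = Λ * (n₀ * m x) := by field_simp
    rw [hfin] at this
    exact le_of_mul_le_mul_left this hΛ
end

section
/- Let c > 0, a > 0, θᵢ ∈ (0,1), β₂ > 0, G₁ > 0, and let u ∈ C²([0,a]) satisfy the energy inequality ½c²θᵢ² ≤ ∫₀ᵃ f(u)v·u' dx + ½u'(a)², where 0 ≤ v ≤ β₂(1-u) pointwise and u' ≥ 0 with u(0) = θᵢ, u(a) = 1. If G₁ = ∫_{θᵢ}^1 f(s)(1-s) ds, then c ≤ √(2β₂(G₁ + u'(a)²/(2β₂)))/θᵢ, i.e. c² θᵢ² ≤ 2β₂ G₁ + u'(a)². -/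
open Set Real MeasureTheory intervalIntegral Filter Topology

/-- First upper bound for the travelling-wave velocity: `c² θᵢ² ≤ 2β₂G₁ + u'(a)²`. -/
theorem stmt_8 (a c θi β₂ G₁ : ℝ) (ha : 0 < a) (hc : 0 < c)
    (hθi : 0 < θi) (hθi1 : θi < 1) (hβ₂ : 0 < β₂) (hG₁ : 0 < G₁)
    (u v f : ℝ → ℝ)
    (hu : ContDiffOn ℝ 2 u (Icc 0 a))
    (hf_cont : ContinuousOn f (Icc 0 1))
    (hf_nonneg : ∀ s ∈ Icc (0:ℝ) 1, 0 ≤ f s)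
    (hu_range : ∀ x ∈ Icc (0:ℝ) a, u x ∈ Icc (0:ℝ) 1)
    (hu' : ∀ x ∈ Icc (0:ℝ) a, 0 ≤ deriv u x)
    (h0 : u 0 = θi) (hA : u a = 1)
    (hv_bound : ∀ x ∈ Icc (0:ℝ) a, 0 ≤ v x ∧ v x ≤ β₂ * (1 - u x))
    (henergy : (1/2) * c^2 * θi^2 ≤
      (∫ x in (0:ℝ)..a, f (u x) * v x * deriv u x) + (1/2) * (deriv u a)^2)
    (hG : G₁ = ∫ s in θi..(1:ℝ), f s * (1 - s)) :
    c^2 * θi^2 ≤ 2 * β₂ * G₁ + (deriv u a)^2 := by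
  set w : ℝ → ℝ := derivWithin u (Icc 0 a) with hw
  have huIcc : uIcc (0:ℝ) a = Icc 0 a := uIcc_of_le ha.le
  have hdiff : DifferentiableOn ℝ u (Icc 0 a) := hu.differentiableOn two_ne_zero
  have hw_cd : ContDiffOn ℝ 1 w (Icc 0 a) := hu.derivWithin (uniqueDiffOn_Icc ha) le_rfl
  have hw_cont : ContinuousOn w (Icc 0 a) := hw_cd.continuousOn
  have hinterior : ∀ x ∈ Ioo (0:ℝ) a, w x = deriv u x ∧ HasDerivAt u (w x) x := by
    intro x hx
    have hmem : Icc (0:ℝ) a ∈ 𝓝 x := Icc_mem_nhds hx.1 hx.2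
    have hda : DifferentiableAt ℝ u x :=
      (hdiff x (Ioo_subset_Icc_self hx)).differentiableAt hmem
    have heq : w x = deriv u x := derivWithin_of_mem_nhds hmem
    exact ⟨heq, heq ▸ hda.hasDerivAt⟩
  have hna : ∀ᵐ x : ℝ, x ≠ a := by
    refine ae_iff.mpr ?_
    simpa using Real.volume_singleton (a := a)
  -- the function f ∘ u is continuous
  have hmaps : MapsTo u (Icc 0 a) (Icc 0 1) := hu_range
  have hg_cont : ContinuousOn (fun s => f s * (1 - s)) (Icc 0 1) :=
    hf_cont.mul (by fun_prop)
  -- change of variables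
  have hsub : (∫ x in (0:ℝ)..a, w x • ((fun s => f s * (1 - s)) ∘ u) x)
      = ∫ s in (u 0)..(u a), f s * (1 - s) := by
    apply integral_comp_smul_deriv'' (f := u) (f' := w)
    · rw [huIcc]; exact hu.continuousOn
    · intro x hx
      rw [min_eq_left ha.le, max_eq_right ha.le] at hx
      exact (hinterior x hx).2.hasDerivWithinAt
    · rw [huIcc]; exact hw_cont
    · rw [huIcc]
      exact hg_cont.mono (image_subset_iff.mpr hmaps)
  -- the continuous majorant
  have hH_cont : ContinuousOn (fun x => β₂ * (f (u x) * (1 - u x)) * w x) (Icc 0 a) := by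
    refine ContinuousOn.mul (continuousOn_const.mul ?_) hw_cont
    exact (hg_cont.comp hu.continuousOn hmaps)
  have hH_int : IntervalIntegrable (fun x => β₂ * (f (u x) * (1 - u x)) * w x) volume 0 a :=
    (hH_cont.mono (by rw [huIcc])).intervalIntegrable
  have haeeq : ∀ᵐ x : ℝ, x ∈ Set.uIoc (0:ℝ) a →
      β₂ * (f (u x) * (1 - u x)) * deriv u x = β₂ * (f (u x) * (1 - u x)) * w x := by
    filter_upwards [hna] with x hx hxI
    rw [uIoc_of_le ha.le] at hxI
    have hxo : x ∈ Ioo (0:ℝ) a := ⟨hxI.1, lt_of_le_of_ne hxI.2 hx⟩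
    rw [(hinterior x hxo).1]
  have hH'_int : IntervalIntegrable (fun x => β₂ * (f (u x) * (1 - u x)) * deriv u x)
      volume 0 a := by
    rw [intervalIntegrable_iff] at hH_int ⊢
    exact hH_int.congr_fun_ae
      ((ae_restrict_iff' measurableSet_uIoc).mpr (haeeq.mono fun x h hx => (h hx).symm))
  have hH'_val : (∫ x in (0:ℝ)..a, β₂ * (f (u x) * (1 - u x)) * deriv u x) = β₂ * G₁ := by
    rw [integral_congr_ae haeeq]
    have : (∫ x in (0:ℝ)..a, β₂ * (f (u x) * (1 - u x)) * w x)
        = β₂ * ∫ x in (0:ℝ)..a, w x • ((fun s => f s * (1 - s)) ∘ u) x := by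
      rw [← intervalIntegral.integral_const_mul]
      apply integral_congr
      intro x _
      simp [Function.comp, smul_eq_mul]
      ring
    rw [this, hsub, h0, hA, hG]
  -- bound the original integral
  have hbound : (∫ x in (0:ℝ)..a, f (u x) * v x * deriv u x) ≤ β₂ * G₁ := by
    by_cases hF : IntervalIntegrable (fun x => f (u x) * v x * deriv u x) volume 0 a
    · rw [← hH'_val]
      refine integral_mono_on ha.le hF hH'_int (fun x hx => ?_)
      have h1 : 0 ≤ f (u x) := hf_nonneg _ (hu_range x hx)
      have h2 : 0 ≤ deriv u x := hu' x hx
      obtain ⟨h3, h4⟩ := hv_bound x hx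
      nlinarith [mul_le_mul_of_nonneg_right (mul_le_mul_of_nonneg_left h4 h1) h2]
    · rw [intervalIntegral.integral_undef hF]
      positivity
  linarith [henergy, hbound]
end
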